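/- arXiv:1703.05156 — 2 statements merged into one kernel-verified Lean document; each statement's English description precedes it below -/
import Mathlib

section
/- Let F_p be a free set of graphs of order p and suppose S_p ∈ F_p (the star on p vertices). With q ≥ 1, let Q be the graph on vertices {a₁, a₂, b, c₁, …, c_{p−3}} with edges {a₁a₂} ∪ {a_i c_j : 1 ≤ i ≤ 2, 1 ≤ j ≤ q}, and let T = Q − a₁c₁ (the graph Q with edge a₁c₁ removed). If Q ∈ F_p and the graph R = T + a₂b contains a member R' of F_p as a subgraph, then no subgraph of T is isomorphic to a member of F_p, while both T + a₁c₁ and T + a₂b contain subgraphs isomorphic to members of F_p; hence F_p is hard. -/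
/-- `A` is isomorphic to a subgraph of `B` (both on `p` vertices). -/
def SubIso {p : ℕ} (A B : SimpleGraph (Fin p)) : Prop :=
  ∃ e : Fin p ≃ Fin p, A.map e.toEmbedding ≤ B

/-- A set of graphs of order `p` is free if no member is isomorphic to a subgraph
of another (distinct) member. -/
def Free {p : ℕ} (Fp : Set (SimpleGraph (Fin p))) : Prop :=
  ∀ A ∈ Fp, ∀ B ∈ Fp, A ≠ B → ¬ SubIso A B

/-- A set `Fp` of graphs of order `p` is hard: there are a graph `J` and two distinct
non-edges `e₁, e₂` of `J` such that no subgraph of `J` is isomorphic to a member of `Fp`,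
while both `J + e₁` and `J + e₂` contain subgraphs isomorphic to members of `Fp`. -/
def Hard {p : ℕ} (Fp : Set (SimpleGraph (Fin p))) : Prop :=
  ∃ J : SimpleGraph (Fin p), ∃ e₁ e₂ : Sym2 (Fin p),
    ¬ e₁.IsDiag ∧ ¬ e₂.IsDiag ∧ e₁ ∉ J.edgeSet ∧ e₂ ∉ J.edgeSet ∧ e₁ ≠ e₂ ∧
    (∀ A ∈ Fp, ¬ SubIso A J) ∧
    (∃ A ∈ Fp, SubIso A (J ⊔ SimpleGraph.fromEdgeSet {e₁})) ∧
    (∃ A ∈ Fp, SubIso A (J ⊔ SimpleGraph.fromEdgeSet {e₂}))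

/-- The star on `p` vertices, centered at vertex `0`. -/
def starGraph (p : ℕ) : SimpleGraph (Fin p) :=
  SimpleGraph.fromRel (fun u v => u.val = 0 ∧ v.val ≠ 0)

/-- The graph `Q` on vertices `{a₁ = 0, a₂ = 1, b = 2, c₁ = 3, …, c_{p-3} = p-1}` with
edges `a₁a₂` and `a_i c_j` for `i ∈ {1,2}`, `1 ≤ j ≤ q`. -/
def Qgraph (p q : ℕ) : SimpleGraph (Fin p) :=
  SimpleGraph.fromRel
    (fun u v => (u.val = 0 ∧ v.val = 1) ∨ ((u.val = 0 ∨ u.val = 1) ∧ 3 ≤ v.val ∧ v.val < 3 + q))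

/-!
Deleting the edge `a₁c₁` from `Q` gives a proper subgraph `T` of `Q`. A member of a free family
cannot embed into `T`: it would then embed into `Q`, so it must be `Q` itself, which has more
edges than `T`. Adding `a₁c₁` back recovers `Q`, and `T + a₂b` contains a member by hypothesis,
so `T` with the non-edges `a₁c₁ ≠ a₂b` witnesses hardness.
-/

namespace SimpleGraph

variable {V : Type*} {G : SimpleGraph V} {e : Sym2 V}

lemma deleteEdges_singleton_sup_fromEdgeSet (he : e ∈ G.edgeSet) :
    G.deleteEdges {e} ⊔ fromEdgeSet {e} = G :=
  sdiff_sup_cancel <| (fromEdgeSet_le G).mpr <| by simp [he]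

lemma deleteEdges_singleton_lt (he : e ∈ G.edgeSet) : G.deleteEdges {e} < G :=
  edgeSet_ssubset_edgeSet.mp <| by
    rw [edgeSet_deleteEdges]
    exact Set.sdiff_singleton_ssubset.mpr he

end SimpleGraph

section SubIso

open SimpleGraph

variable {p : ℕ} {A B C : SimpleGraph (Fin p)}

lemma SubIso.of_le (h : A ≤ B) : SubIso A B :=
  ⟨Equiv.refl _, (map_id A).trans_le h⟩

lemma SubIso.mono_right (h : SubIso A B) (hBC : B ≤ C) : SubIso A C :=
  let ⟨e, he⟩ := h
  ⟨e, he.trans hBC⟩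

lemma SubIso.ncard_edgeSet_le (h : SubIso A B) : A.edgeSet.ncard ≤ B.edgeSet.ncard := by
  obtain ⟨e, he⟩ := h
  calc A.edgeSet.ncard = (A.map e.toEmbedding).edgeSet.ncard := by
        rw [edgeSet_map, Set.ncard_image_of_injective _ e.toEmbedding.sym2Map.injective]
    _ ≤ B.edgeSet.ncard := Set.ncard_le_ncard (edgeSet_mono he) (Set.toFinite _)

lemma SubIso.not_lt (h : SubIso A B) : ¬ B < A := fun hBA =>
  h.ncard_edgeSet_le.not_gt (Set.ncard_lt_ncard (edgeSet_ssubset_edgeSet.mpr hBA))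

end SubIso

namespace Free

variable {p : ℕ} {Fp : Set (SimpleGraph (Fin p))} {B Q : SimpleGraph (Fin p)} {e e' : Sym2 (Fin p)}

lemma not_subIso_of_lt (hfree : Free Fp) (hQ : Q ∈ Fp) (hBQ : B < Q) :
    ∀ A ∈ Fp, ¬ SubIso A B := by
  intro A hA hAB
  by_cases hAQ : A = Q
  · exact hAB.not_lt (hAQ ▸ hBQ)
  · exact hfree A hA Q hQ hAQ (hAB.mono_right hBQ.le)

lemma hard_of_deleteEdges (hfree : Free Fp) (hQ : Q ∈ Fp) (he : e ∈ Q.edgeSet)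
    (he' : ¬ e'.IsDiag) (he'Q : e' ∉ Q.edgeSet)
    (hR : ∃ R ∈ Fp, SubIso R (Q.deleteEdges {e} ⊔ SimpleGraph.fromEdgeSet {e'})) :
    Hard Fp := by
  have hlt := SimpleGraph.deleteEdges_singleton_lt he
  refine ⟨Q.deleteEdges {e}, e, e', Q.not_isDiag_of_mem_edgeSet he, he', ?_,
    fun h => he'Q (SimpleGraph.edgeSet_mono hlt.le h), ?_, hfree.not_subIso_of_lt hQ hlt,
    ⟨Q, hQ, .of_le (SimpleGraph.deleteEdges_singleton_sup_fromEdgeSet he).ge⟩, hR⟩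
  · simp [SimpleGraph.edgeSet_deleteEdges]
  · rintro rfl
    exact he'Q he

end Free

/-- with `Fp` free, `S_p ∈ Fp`, `Q = Qgraph p q ∈ Fp` (`q ≥ 1`),
`T = Q - a₁c₁`, if `R = T + a₂b` contains a member of `Fp` as a subgraph, then no subgraph
of `T` is isomorphic to a member of `Fp`, while both `T + a₁c₁` and `T + a₂b` contain
subgraphs isomorphic to members of `Fp`; hence `Fp` is hard. -/
theorem hard_via_T {p q : ℕ} (hp : 4 ≤ p) (hq1 : 1 ≤ q)
    (Fp : Set (SimpleGraph (Fin p))) (hfree : Free Fp)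
    (hQ : Qgraph p q ∈ Fp)
    (T : SimpleGraph (Fin p))
    (hT : T = Qgraph p q \
      SimpleGraph.fromEdgeSet {s((⟨0, by omega⟩ : Fin p), (⟨3, by omega⟩ : Fin p))})
    (hR : ∃ R' ∈ Fp, SubIso R'
      (T ⊔ SimpleGraph.fromEdgeSet {s((⟨1, by omega⟩ : Fin p), (⟨2, by omega⟩ : Fin p))})) :
    (∀ A ∈ Fp, ¬ SubIso A T) ∧
    (∃ A ∈ Fp, SubIso A
      (T ⊔ SimpleGraph.fromEdgeSet {s((⟨0, by omega⟩ : Fin p), (⟨3, by omega⟩ : Fin p))})) ∧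
    (∃ A ∈ Fp, SubIso A
      (T ⊔ SimpleGraph.fromEdgeSet {s((⟨1, by omega⟩ : Fin p), (⟨2, by omega⟩ : Fin p))})) ∧
    Hard Fp := by
  have ha₁c₁ : s((⟨0, by omega⟩ : Fin p), ⟨3, by omega⟩) ∈ (Qgraph p q).edgeSet := by
    simpa [Qgraph, Fin.ext_iff] using Nat.succ_le_iff.mp hq1
  have ha₂b : s((⟨1, by omega⟩ : Fin p), ⟨2, by omega⟩) ∉ (Qgraph p q).edgeSet := by
    simp only [SimpleGraph.mem_edgeSet, Qgraph, SimpleGraph.fromRel_adj]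
    omega
  have ha₂b_diag : ¬ s((⟨1, by omega⟩ : Fin p), ⟨2, by omega⟩).IsDiag := by
    simp [Fin.ext_iff]
  change T = (Qgraph p q).deleteEdges _ at hT
  subst hT
  exact ⟨hfree.not_subIso_of_lt hQ (SimpleGraph.deleteEdges_singleton_lt ha₁c₁),
    ⟨_, hQ, .of_le (SimpleGraph.deleteEdges_singleton_sup_fromEdgeSet ha₁c₁).ge⟩, hR,
    hfree.hard_of_deleteEdges hQ ha₁c₁ ha₂b_diag ha₂b hR⟩
end

section
/- In the W[2]-hardness reduction: let F be a family of graphs closed under addition of isolated vertices, containing no edgeless graph, with all members having exactly r non-isolated vertices. Let δ be the minimum over F ∈ F of the minimum degree among non-isolated vertices of F, attained by F_δ with n_δ vertices; let F_e ∈ F have the minimum number m_e of edges and n_e vertices. For a Hitting Set instance (U, 𝒮) with U = {u₁,…,u_n}, build hypergraph H with vertex set V_δ (of size r−1) ∪ ⋃ᵢ Vⁱ (each Vⁱ of size n_δ − r + 1) ∪ ⋃_{u≠v ∈ V_δ} V_{u,v} (each of size n_e − 2), with hyperedges h_{u,v} = {u,v} ∪ V_{u,v} for all pairs u ≠ v in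 V_δ, and h_S = V_δ ∪ ⋃_{i : u_i ∈ S} Vⁱ for all S ∈ 𝒮. Then τ(U, 𝒮) ≤ k if and only if ov_F(H) ≤ binom(r−1, 2)·m_e + k·δ. -/
/-!
Forward: given a hitting set `K`, put a copy of `Fe` on every pair hyperedge `h_{u,v}`, routed
so that it contains the edge `uv`; together these make `V_δ` a clique. For `u ∈ K`, add the star
of a vertex `v₀` of degree `δ` in `Fδ`, centred in the block `Vᵘ`. Since `|V_δ ∪ Vᵘ| = nδ`,
`Fδ` then embeds into `V_δ ∪ Vᵘ` with `v₀` in `Vᵘ` and its other `r - 1` non-isolated vertices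
in the clique, and this copy covers every `h_S` with `u ∈ S`.

Backward: two distinct pair hyperedges share at most one vertex, and none of them meets a
block, so they use `C(r-1,2)·me` edges that meet no block. This leaves at most `kδ` edges that
meet blocks. A copy of a member of `F` inside `h_S` has `r` non-isolated vertices and only
`r - 1` of them fit in `V_δ`, so one lies in a block `Vᵘ` with `u ∈ S`. It has at least `δ`
edges, each meeting `Vᵘ` and only blocks of `S`. Choosing such a `u` greedily and discarding its
edges gives a hitting set of size at most `k`.
-/

set_option synthInstance.maxSize 600

def Overlays (F : ∀ n, Set (SimpleGraph (Fin n))) {V : Type} [Fintype V] [DecidableEq V]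
    (G : SimpleGraph V) (H : Finset (Finset V)) : Prop :=
  ∀ S ∈ H, ∃ A ∈ F S.card, ∃ e : Fin S.card ≃ {x // x ∈ S},
    ∀ a b, A.Adj a b → G.Adj (e a).1 (e b).1

def ClosedUnderIsolated (F : ∀ n, Set (SimpleGraph (Fin n))) : Prop :=
  ∀ n, ∀ A ∈ F n, A.map (⟨Fin.castSucc, Fin.castSucc_injective n⟩ : Fin n ↪ Fin (n + 1)) ∈ F (n + 1)

/-- The hypergraph of the W[2]-hardness reduction: vertex set
`V_δ ⊕ ⋃ᵢ Vⁱ ⊕ ⋃_{u<v} V_{u,v}` (with `|V_δ| = r'`, `|Vⁱ| = a`, `|V_{u,v}| = b`), with a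
hyperedge `h_{u,v} = {u,v} ∪ V_{u,v}` for each pair `u < v` of `V_δ` and a hyperedge
`h_S = V_δ ∪ ⋃_{i ∈ S} Vⁱ` for each `S ∈ 𝒮`. -/
abbrev RedVert (r' a b : ℕ) (U : Type) : Type :=
  Fin r' ⊕ (U × Fin a) ⊕ ({q : Fin r' × Fin r' // q.1 < q.2} × Fin b)

def constructedH (r' a b : ℕ) (U : Type) [Fintype U] [DecidableEq U]
    (𝒮 : Finset (Finset U)) : Finset (Finset (RedVert r' a b U)) :=
  ((Finset.univ : Finset {q : Fin r' × Fin r' // q.1 < q.2}).image (fun q =>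
      ({Sum.inl q.1.1, Sum.inl q.1.2} : Finset (RedVert r' a b U)) ∪
        Finset.univ.image (fun i : Fin b => Sum.inr (Sum.inr (q, i)))))
    ∪ 𝒮.image (fun S =>
      ((Finset.univ.image Sum.inl : Finset (RedVert r' a b U))) ∪
        ((S ×ˢ (Finset.univ : Finset (Fin a))).image (fun x => Sum.inr (Sum.inl x))))

open Finset

theorem Fintype.card_subtype_fst_lt_snd {α : Type*} [Fintype α] [LinearOrder α] :
    Fintype.card {q : α × α // q.1 < q.2} = (Fintype.card α).choose 2 := by
  rw [Fintype.card_subtype, Fintype.card_product_filter_lt]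

theorem exists_embedding_extend_of_card_eq {α β : Type*} [Fintype α] {t : Finset β}
    (h : Fintype.card α = #t) {s : Set α} {f : α → β} (hst : s.MapsTo f t) (hf : s.InjOn f) :
    ∃ g : α ↪ β, (∀ x, g x ∈ t) ∧ s.EqOn g f := by
  obtain ⟨g, hg⟩ := hst.exists_equiv_extend_of_card_eq h hf
  exact ⟨g.toEmbedding.trans (Function.Embedding.subtype _), fun x => (g x).2, hg⟩

namespace SimpleGraph

variable {V W : Type*}

theorem ncard_edgeSet_map (f : V ↪ W) (A : SimpleGraph V) :
    (A.map f).edgeSet.ncard = A.edgeSet.ncard := by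
  rw [edgeSet_map]
  exact Set.ncard_image_of_injective _ f.sym2Map.injective

theorem ncard_edgeSet_finset_sup_le [Finite V] {ι : Type*} (s : Finset ι)
    (G : ι → SimpleGraph V) : (s.sup G).edgeSet.ncard ≤ ∑ i ∈ s, (G i).edgeSet.ncard := by
  rw [Finset.sup_eq_iSup]
  simpa only [edgeSet_iSup] using s.set_ncard_biUnion_le fun i => (G i).edgeSet

theorem ncard_edgeSet_finset_sup_map_le [Finite W] {ι : Type*} (s : Finset ι)
    (A : SimpleGraph V) (f : ι → V ↪ W) :
    (s.sup fun i => A.map (f i)).edgeSet.ncard ≤ #s * A.edgeSet.ncard := by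
  simpa [ncard_edgeSet_map] using ncard_edgeSet_finset_sup_le s fun i => A.map (f i)

theorem ncard_edgeSet_fromEdgeSet_incidenceSet (A : SimpleGraph V) (v : V) :
    (fromEdgeSet (A.incidenceSet v)).edgeSet.ncard = (A.neighborSet v).ncard := by
  classical
  rw [edgeSet_fromEdgeSet, Disjoint.sdiff_eq_left (Set.disjoint_left.2 fun e he hd =>
    A.not_isDiag_of_mem_edgeSet he.1 (Sym2.mem_diagSet.1 hd))]
  exact Nat.card_congr (A.incidenceSetEquivNeighborSet v)

theorem map_le_of_isClique {A : SimpleGraph W} {G : SimpleGraph V} (t : W ↪ V) {v₀ : W}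
    {C : Set V} (hC : G.IsClique C) (hstar : (fromEdgeSet (A.incidenceSet v₀)).map t ≤ G)
    (ht : ∀ v, v ≠ v₀ → (∃ w, A.Adj v w) → t v ∈ C) : A.map t ≤ G := by
  rintro _ _ ⟨hne, a, b, hab, rfl, rfl⟩
  by_cases h : a = v₀ ∨ b = v₀
  · refine hstar ⟨hne, a, b, (fromEdgeSet_adj _).2 ⟨⟨hab, ?_⟩, hab.ne⟩, rfl, rfl⟩
    rcases h with rfl | rfl
    exacts [Sym2.mem_mk_left _ _, Sym2.mem_mk_right _ _]
  · push Not at h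
    exact hC (ht a h.1 ⟨b, hab⟩) (ht b h.2 ⟨a, hab.symm⟩) hne

end SimpleGraph

theorem exists_hitting_set_of_witnesses {β U : Type*} [DecidableEq U] [Finite β]
    (touches : β → U → Prop) {δ : ℕ} (hδ : 0 < δ) (k : ℕ) (𝒮 : Finset (Finset U))
    (T : Set β) (hT : T.ncard ≤ k * δ)
    (hwit : ∀ S ∈ 𝒮, ∃ u ∈ S, ∃ W ⊆ T, δ ≤ W.ncard ∧
      ∀ e ∈ W, touches e u ∧ ∀ u', touches e u' → u' ∈ S) :
    ∃ K : Finset U, #K ≤ k ∧ ∀ S ∈ 𝒮, ∃ u ∈ K, u ∈ S := by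
  induction k generalizing 𝒮 T with
  | zero =>
    refine ⟨∅, by simp, fun S hS => ?_⟩
    obtain ⟨u, -, W, hWT, hW, -⟩ := hwit S hS
    have := Set.ncard_le_ncard hWT
    omega
  | succ k ih =>
    rcases 𝒮.eq_empty_or_nonempty with rfl | ⟨S₀, hS₀⟩
    · exact ⟨∅, by simp, by simp⟩
    obtain ⟨u₀, -, W₀, hW₀T, hW₀, hW₀u₀⟩ := hwit S₀ hS₀
    set T' := {e ∈ T | ¬ touches e u₀}
    have hT' : T'.ncard ≤ k * δ := by
      have hW₀T' : W₀ ⊆ T \ T' := fun e he => ⟨hW₀T he, fun h => h.2 (hW₀u₀ e he).1⟩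
      have := Set.ncard_le_ncard hW₀T'
      have := Set.ncard_sdiff_add_ncard_of_subset (show T' ⊆ T from Set.sep_subset _ _)
      rw [add_mul, one_mul] at hT
      omega
    obtain ⟨K, hK, hKS⟩ := ih (𝒮.filter (u₀ ∉ ·)) T' hT' fun S hS => by
      obtain ⟨hS, hu₀S⟩ := mem_filter.1 hS
      obtain ⟨u, huS, W, hWT, hW, hWu⟩ := hwit S hS
      exact ⟨u, huS, W, fun e he => ⟨hWT he, fun h => hu₀S ((hWu e he).2 u₀ h)⟩, hW, hWu⟩
    refine ⟨insert u₀ K, (card_insert_le _ _).trans (by omega), fun S hS => ?_⟩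
    by_cases hu₀ : u₀ ∈ S
    · exact ⟨u₀, mem_insert_self _ _, hu₀⟩
    · obtain ⟨u, hu, huS⟩ := hKS S (mem_filter.2 ⟨hS, hu₀⟩)
      exact ⟨u, mem_insert_of_mem hu, huS⟩

section Overlays

variable {F : ∀ n, Set (SimpleGraph (Fin n))} {V : Type}

def HasSpanningCopy (F : ∀ n, Set (SimpleGraph (Fin n))) (G : SimpleGraph V) (S : Finset V) :
    Prop :=
  ∃ A ∈ F #S, ∃ f : Fin #S ↪ V, (∀ i, f i ∈ S) ∧ A.map f ≤ G

theorem overlays_iff_forall_hasSpanningCopy [Fintype V] [DecidableEq V] {G : SimpleGraph V}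
    {H : Finset (Finset V)} : Overlays F G H ↔ ∀ S ∈ H, HasSpanningCopy F G S := by
  unfold Overlays HasSpanningCopy
  refine forall₂_congr fun S _ => exists_congr fun A => and_congr_right fun _ => ⟨?_, ?_⟩
  · rintro ⟨e, he⟩
    refine ⟨e.toEmbedding.trans (Function.Embedding.subtype _), fun i => (e i).2, ?_⟩
    rintro _ _ ⟨-, a, b, hab, rfl, rfl⟩
    exact he a b hab
  · rintro ⟨f, hfS, hAG⟩
    have hbij : Function.Bijective fun i => (⟨f i, hfS i⟩ : S) :=
      (Fintype.bijective_iff_injective_and_card _).2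
        ⟨fun i j h => f.injective (congrArg Subtype.val h), by simp⟩
    exact ⟨Equiv.ofBijective _ hbij,
      fun a b hab => hAG ⟨f.injective.ne hab.ne, a, b, hab, rfl, rfl⟩⟩

theorem ClosedUnderIsolated.map_castLE_mem (hF : ClosedUnderIsolated F) {n m : ℕ}
    {A : SimpleGraph (Fin n)} (hA : A ∈ F n) (h : n ≤ m) : A.map (Fin.castLE h) ∈ F m := by
  induction m, h using Nat.le_induction with
  | base => simpa [Fin.castLE_refl] using hA
  | succ m _ ih =>
    convert hF m _ ih using 1
    rw [SimpleGraph.map_map]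
    rfl

theorem HasSpanningCopy.of_map_le (hF : ClosedUnderIsolated F) {n : ℕ}
    {A : SimpleGraph (Fin n)} (hA : A ∈ F n) {G : SimpleGraph V} {S : Finset V}
    (f : Fin n ↪ V) (hfS : ∀ i, f i ∈ S) (hn : n ≤ #S) (hAG : A.map f ≤ G) :
    HasSpanningCopy F G S := by
  -- `f'` is arbitrary off the range of `Fin.castLE hn`
  set f' : Fin #S → V := fun i => if h : (i : ℕ) < n then f ⟨i, h⟩ else S.equivFin.symm i
  have hf' : ∀ x, f' (Fin.castLE hn x) = f x := fun x => by simp [f', x.isLt]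
  obtain ⟨g, hgS, hgf⟩ := exists_embedding_extend_of_card_eq (t := S) (by simp)
    (s := Set.range (Fin.castLE hn)) (f := f') (by rintro _ ⟨x, rfl⟩; simpa [hf'] using hfS x)
    (by rintro _ ⟨x, rfl⟩ _ ⟨y, rfl⟩ h; simp only [hf'] at h; rw [f.injective h])
  refine ⟨A.map (Fin.castLE hn), hF.map_castLE_mem hA hn, g, hgS, ?_⟩
  have : ⇑g ∘ Fin.castLE hn = f := funext fun x => (hgf ⟨x, rfl⟩).trans (hf' x)
  rwa [SimpleGraph.map_map, this]

theorem card_mul_add_ncard_le_of_hasSpanningCopy [Finite V] [DecidableEq V] {ι : Type*}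
    [Fintype ι] {G : SimpleGraph V} {S : ι → Finset V} (hS : ∀ i, HasSpanningCopy F G (S i))
    (hlin : Pairwise fun i j => #(S i ∩ S j) ≤ 1) {m : ℕ}
    (hm : ∀ n, ∀ A ∈ F n, m ≤ A.edgeSet.ncard) {X : Set (Sym2 V)} (hXG : X ⊆ G.edgeSet)
    (hXS : ∀ e ∈ X, ∀ i, ∃ x ∈ e, x ∉ S i) :
    Fintype.card ι * m + X.ncard ≤ G.edgeSet.ncard := by
  choose A hA f hfS hAG using hS
  set C := fun i => ((A i).map (f i)).edgeSet
  have hCS : ∀ i, ∀ e ∈ C i, ∀ x ∈ e, x ∈ S i := by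
    intro i e he x hx
    simp only [C, SimpleGraph.edgeSet_map, Set.mem_image, Function.Embedding.sym2Map_apply] at he
    obtain ⟨e, -, rfl⟩ := he
    obtain ⟨y, -, rfl⟩ := Sym2.mem_map.1 hx
    exact hfS i y
  -- an edge lies inside two hyperedges only if they share both of its ends
  have hdisj : Pairwise fun i j => Disjoint (C i) (C j) := by
    refine fun i j hij => Set.disjoint_left.2 fun e hi hj => ?_
    induction e using Sym2.ind with
    | _ x y =>
      refine ((SimpleGraph.mem_edgeSet _).1 hi).ne (Finset.card_le_one.1 (hlin hij) x ?_ y ?_)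
      exacts [mem_inter.2 ⟨hCS i _ hi x (Sym2.mem_mk_left _ _),
          hCS j _ hj x (Sym2.mem_mk_left _ _)⟩,
        mem_inter.2 ⟨hCS i _ hi y (Sym2.mem_mk_right _ _),
          hCS j _ hj y (Sym2.mem_mk_right _ _)⟩]
  have hXC : Disjoint (⋃ i, C i) X := by
    refine Set.disjoint_left.2 fun e he heX => ?_
    obtain ⟨i, hi⟩ := Set.mem_iUnion.1 he
    obtain ⟨x, hx, hxS⟩ := hXS e heX i
    exact hxS (hCS i e hi x hx)
  have hC : Fintype.card ι * m ≤ (⋃ i, C i).ncard := by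
    rw [Set.ncard_iUnion_of_finite (fun _ => Set.toFinite _) hdisj, finsum_eq_sum_of_fintype,
      ← smul_eq_mul, ← Finset.card_univ, ← Finset.sum_const]
    exact Finset.sum_le_sum fun i _ => (SimpleGraph.ncard_edgeSet_map _ _).symm ▸ hm _ _ (hA i)
  calc Fintype.card ι * m + X.ncard
      ≤ ((⋃ i, C i) ∪ X).ncard := Set.ncard_union_eq hXC ▸ Nat.add_le_add_right hC _
    _ ≤ G.edgeSet.ncard :=
        Set.ncard_le_ncard (Set.union_subset (Set.iUnion_subset fun i =>
          SimpleGraph.edgeSet_mono (hAG i)) hXG)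

end Overlays

section Reduction

variable {r' a b : ℕ} {U : Type} [DecidableEq U] {F : ∀ n, Set (SimpleGraph (Fin n))}

def pairHyperedge (q : {q : Fin r' × Fin r' // q.1 < q.2}) : Finset (RedVert r' a b U) :=
  {Sum.inl q.1.1, Sum.inl q.1.2} ∪ univ.image fun i => Sum.inr (Sum.inr (q, i))

def setHyperedge (S : Finset U) : Finset (RedVert r' a b U) :=
  univ.image Sum.inl ∪ (S ×ˢ univ).image fun x => Sum.inr (Sum.inl x)

theorem constructedH_eq [Fintype U] (𝒮 : Finset (Finset U)) :
    constructedH r' a b U 𝒮 = univ.image pairHyperedge ∪ 𝒮.image setHyperedge :=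
  rfl

theorem mem_pairHyperedge {q : {q : Fin r' × Fin r' // q.1 < q.2}} {x : RedVert r' a b U} :
    x ∈ pairHyperedge q ↔ x = .inl q.1.1 ∨ x = .inl q.1.2 ∨ ∃ i, x = .inr (.inr (q, i)) := by
  simp [pairHyperedge, eq_comm]

@[simp]
theorem inl_mem_setHyperedge {S : Finset U} (i : Fin r') :
    (Sum.inl i : RedVert r' a b U) ∈ setHyperedge S := by
  simp [setHyperedge]

@[simp]
theorem block_mem_setHyperedge {S : Finset U} {u : U} {j : Fin a} :
    (Sum.inr (Sum.inl (u, j)) : RedVert r' a b U) ∈ setHyperedge S ↔ u ∈ S := by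
  simp [setHyperedge]

@[simp]
theorem pairBlock_not_mem_setHyperedge {S : Finset U}
    (p : {q : Fin r' × Fin r' // q.1 < q.2} × Fin b) :
    (Sum.inr (Sum.inr p) : RedVert r' a b U) ∉ setHyperedge S := by
  simp [setHyperedge]

@[simp]
theorem block_not_mem_pairHyperedge {q : {q : Fin r' × Fin r' // q.1 < q.2}} (u : U)
    (j : Fin a) :
    (Sum.inr (Sum.inl (u, j)) : RedVert r' a b U) ∉ pairHyperedge q := by
  simp [pairHyperedge]

theorem setHyperedge_mono {S T : Finset U} (h : S ⊆ T) :
    (setHyperedge S : Finset (RedVert r' a b U)) ⊆ setHyperedge T := by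
  unfold setHyperedge
  gcongr

theorem card_pairHyperedge (q : {q : Fin r' × Fin r' // q.1 < q.2}) :
    #(pairHyperedge q : Finset (RedVert r' a b U)) = 2 + b := by
  rw [pairHyperedge, card_union_of_disjoint (by simp [disjoint_left]),
    card_image_of_injective _ (fun i j h => by simpa using h), card_pair (by simpa using q.2.ne)]
  simp

theorem card_setHyperedge (S : Finset U) :
    #(setHyperedge S : Finset (RedVert r' a b U)) = r' + #S * a := by
  rw [setHyperedge, card_union_of_disjoint (by simp [disjoint_left]),
    card_image_of_injective _ Sum.inl_injective,
    card_image_of_injective _ (fun x y h => by simpa using h)]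
  simp

theorem card_inter_pairHyperedge_le_one {q q' : {q : Fin r' × Fin r' // q.1 < q.2}}
    (hq : q ≠ q') : #(pairHyperedge q ∩ pairHyperedge q' : Finset (RedVert r' a b U)) ≤ 1 := by
  obtain ⟨⟨x, y⟩, hxy⟩ := q
  obtain ⟨⟨x', y'⟩, hxy'⟩ := q'
  simp only [ne_eq, Subtype.mk.injEq, Prod.mk.injEq] at hq
  refine card_le_one.2 fun v hv w hw => ?_
  simp only [mem_inter, mem_pairHyperedge] at hv hw
  -- a vertex of `V_{u,v}` determines the pair, and distinct pairs `u < v` share at most one end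
  grind

theorem exists_pair_embedding {n : ℕ} (hn : n = 2 + b) {a₁ b₁ : Fin n} (hab : a₁ ≠ b₁)
    (q : {q : Fin r' × Fin r' // q.1 < q.2}) :
    ∃ f : Fin n ↪ RedVert r' a b U,
      (∀ x, f x ∈ pairHyperedge q) ∧ f a₁ = .inl q.1.1 ∧ f b₁ = .inl q.1.2 := by
  obtain ⟨f, hfq, hf⟩ := exists_embedding_extend_of_card_eq
    (t := (pairHyperedge q : Finset (RedVert r' a b U))) (s := {a₁, b₁})
    (f := fun v => if v = a₁ then .inl q.1.1 else .inl q.1.2)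
    (by rw [Fintype.card_fin, card_pairHyperedge, hn])
    (by rintro v (rfl | rfl) <;> simp [mem_pairHyperedge, hab.symm])
    (by rintro v (rfl | rfl) w (rfl | rfl) h <;> simp_all [q.2.ne, q.2.ne'])
  exact ⟨f, hfq, (hf (Set.mem_insert a₁ _)).trans (if_pos rfl),
    (hf (Set.mem_insert_of_mem _ rfl)).trans (if_neg hab.symm)⟩

theorem exists_block_embedding {n : ℕ} (hn : n = r' + a) {N : Finset (Fin n)} {v₀ : Fin n}
    (hv₀ : v₀ ∈ N) (hN : #N = r' + 1) (u : U) (j : Fin a) :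
    ∃ t : Fin n ↪ RedVert r' a b U,
      (∀ x, t x ∈ setHyperedge {u}) ∧ ∀ v ∈ N, v ≠ v₀ → t v ∈ Set.range Sum.inl := by
  obtain ⟨ψ⟩ : Nonempty ({v // v ∈ N.erase v₀} ↪ Fin r') :=
    Function.Embedding.nonempty_of_card_le (by
      rw [Fintype.card_coe, card_erase_of_mem hv₀, hN, Fintype.card_fin, Nat.add_sub_cancel])
  set f : Fin n → RedVert r' a b U := fun v =>
    if h : v ∈ N.erase v₀ then .inl (ψ ⟨v, h⟩) else .inr (.inl (u, j))
  obtain ⟨t, htu, htf⟩ :=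
    exists_embedding_extend_of_card_eq (t := setHyperedge {u}) (s := N) (f := f)
      (by simp [hn, card_setHyperedge])
      (fun v _ => by simp only [f]; split_ifs <;> simp)
      (fun v hv w hw h => by
        simp only [f] at h
        split_ifs at h with hv' hw'
        · exact congrArg Subtype.val (ψ.injective (Sum.inl_injective h))
        all_goals simp_all)
  refine ⟨t, htu, fun v hv hne => ?_⟩
  exact ⟨ψ ⟨v, mem_erase.2 ⟨hne, hv⟩⟩, ((htf hv).trans (by simp [f, hne, hv])).symm⟩

theorem exists_overlays_of_hitting_set [Fintype U] (hF : ClosedUnderIsolated F)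
    {nδ ne' δ me : ℕ} {Fδ : SimpleGraph (Fin nδ)} (hFδ : Fδ ∈ F nδ) {v₀ : Fin nδ}
    (hv₀ : ∃ w, Fδ.Adj v₀ w) (hv₀δ : (Fδ.neighborSet v₀).ncard = δ)
    (hNδ : {v | ∃ w, Fδ.Adj v w}.ncard = r' + 1) (hnδ : nδ = r' + a) (ha : 0 < a)
    {Fe : SimpleGraph (Fin ne')} (hFe : Fe ∈ F ne') (hFeme : Fe.edgeSet.ncard = me)
    {a₁ b₁ : Fin ne'} (hab : Fe.Adj a₁ b₁) (hne' : ne' = 2 + b) {𝒮 : Finset (Finset U)}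
    {K : Finset U} (hK : ∀ S ∈ 𝒮, ∃ u ∈ K, u ∈ S) :
    ∃ G : SimpleGraph (RedVert r' a b U), Overlays F G (constructedH r' a b U 𝒮) ∧
      G.edgeSet.ncard ≤ r'.choose 2 * me + #K * δ := by
  classical
  choose fq hfq hfq₁ hfq₂ using exists_pair_embedding (U := U) (a := a) hne' hab.ne
  choose t ht htN using fun u : U => exists_block_embedding (b := b) hnδ
    (N := {v | ∃ w, Fδ.Adj v w}.toFinset) (by simpa using hv₀)
    (by rwa [← Set.ncard_eq_toFinset_card']) u (⟨0, ha⟩ : Fin a)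
  set G := univ.sup (fun q => Fe.map (fq q)) ⊔
    K.sup fun u => (SimpleGraph.fromEdgeSet (Fδ.incidenceSet v₀)).map (t u)
  have hclique : G.IsClique (Set.range Sum.inl) := by
    rintro _ ⟨i, rfl⟩ _ ⟨i', rfl⟩ hii'
    wlog h : i < i' generalizing i i'
    · exact (this i' i hii'.symm (lt_of_le_of_ne (not_lt.1 h) (by simpa using hii'.symm))).symm
    exact le_sup_of_le_left (le_sup (f := fun q => Fe.map (fq q)) (mem_univ ⟨(i, i'), h⟩))
      ⟨hii', a₁, b₁, hab, hfq₁ _, hfq₂ _⟩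
  refine ⟨G, overlays_iff_forall_hasSpanningCopy.2 ?_, ?_⟩
  · rw [constructedH_eq]
    rintro _ hS
    rcases mem_union.1 hS with hS | hS
    · obtain ⟨q, -, rfl⟩ := mem_image.1 hS
      exact .of_map_le hF hFe (fq q) (hfq q) (by rw [card_pairHyperedge, hne'])
        (le_sup_of_le_left (le_sup (f := fun q => Fe.map (fq q)) (mem_univ q)))
    · obtain ⟨S, hS𝒮, rfl⟩ := mem_image.1 hS
      obtain ⟨u, huK, huS⟩ := hK S hS𝒮
      refine .of_map_le hF hFδ (t u)
        (fun x => setHyperedge_mono (singleton_subset_iff.2 huS) (ht u x)) ?_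
        (SimpleGraph.map_le_of_isClique (t u) hclique (le_sup_of_le_right (le_sup (f := fun u =>
          (SimpleGraph.fromEdgeSet (Fδ.incidenceSet v₀)).map (t u)) huK))
          fun v hv hvN => htN u v (by simpa using hvN) hv)
      rw [card_setHyperedge, hnδ]
      have := card_pos.2 ⟨u, huS⟩
      nlinarith
  · rw [SimpleGraph.edgeSet_sup]
    refine (Set.ncard_union_le _ _).trans (add_le_add ?_ ?_)
    · simpa [hFeme, Fintype.card_subtype_fst_lt_snd] using
        SimpleGraph.ncard_edgeSet_finset_sup_map_le univ Fe fq
    · simpa only [SimpleGraph.ncard_edgeSet_fromEdgeSet_incidenceSet, hv₀δ] using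
        SimpleGraph.ncard_edgeSet_finset_sup_map_le K (.fromEdgeSet (Fδ.incidenceSet v₀)) t

/-- `Vᵘ = {inr (inl (u, j)) | j}` is the block of `u`. -/
def MeetsBlock (e : Sym2 (RedVert r' a b U)) (u : U) : Prop :=
  ∃ j, Sum.inr (Sum.inl (u, j)) ∈ e

theorem exists_witness_of_hasSpanningCopy {δ : ℕ}
    (hN : ∀ n, ∀ A ∈ F n, r' < {v | ∃ w, A.Adj v w}.ncard)
    (hδmin : ∀ n, ∀ A ∈ F n, ∀ v, (∃ w, A.Adj v w) → δ ≤ (A.neighborSet v).ncard)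
    {G : SimpleGraph (RedVert r' a b U)} {S : Finset U}
    (hS : HasSpanningCopy F G (setHyperedge S)) :
    ∃ u ∈ S, ∃ W ⊆ {e ∈ G.edgeSet | ∃ u, MeetsBlock e u}, δ ≤ W.ncard ∧
      ∀ e ∈ W, MeetsBlock e u ∧ ∀ u', MeetsBlock e u' → u' ∈ S := by
  obtain ⟨A, hA, f, hfS, hAG⟩ := hS
  -- only `r'` vertices of `h_S` lie outside the blocks
  obtain ⟨x, ⟨y₀, hxy₀⟩, hx⟩ : ∃ x, (∃ w, A.Adj x w) ∧ f x ∉ Set.range Sum.inl := by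
    by_contra! h
    have := Set.ncard_le_ncard_of_injOn f h f.injective.injOn
    rw [Set.ncard_range_of_injective Sum.inl_injective, Nat.card_eq_fintype_card,
      Fintype.card_fin] at this
    exact (hN _ A hA).not_ge this
  obtain ⟨u, j, hfx, huS⟩ : ∃ u j, f x = .inr (.inl (u, j)) ∧ u ∈ S := by
    have hfxS := hfS x
    rcases hfx : f x with i | ⟨u, j⟩ | p
    · exact absurd ⟨i, hfx.symm⟩ hx
    · exact ⟨u, j, rfl, by simpa [hfx] using hfxS⟩
    · simp [hfx] at hfxS
  refine ⟨u, huS, (fun y => s(f x, f y)) '' A.neighborSet x, ?_, ?_, ?_⟩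
  · rintro _ ⟨y, hy, rfl⟩
    exact ⟨hAG ⟨f.injective.ne hy.ne, x, y, hy, rfl, rfl⟩, u, j, hfx ▸ Sym2.mem_mk_left _ _⟩
  · rw [Set.ncard_image_of_injective _ fun y y' h => f.injective (Sym2.congr_right.1 h)]
    exact hδmin _ A hA x ⟨y₀, hxy₀⟩
  · rintro _ ⟨y, -, rfl⟩
    refine ⟨⟨j, hfx ▸ Sym2.mem_mk_left _ _⟩, fun u' ⟨j', hj'⟩ => ?_⟩
    rcases Sym2.mem_iff.1 hj' with h | h
    · exact block_mem_setHyperedge.1 (h ▸ hfS x)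
    · exact block_mem_setHyperedge.1 (h ▸ hfS y)

theorem exists_hitting_set_of_overlays [Fintype U] {δ me k : ℕ} (hδ : 0 < δ)
    (hN : ∀ n, ∀ A ∈ F n, r' < {v | ∃ w, A.Adj v w}.ncard)
    (hδmin : ∀ n, ∀ A ∈ F n, ∀ v, (∃ w, A.Adj v w) → δ ≤ (A.neighborSet v).ncard)
    (hmemin : ∀ n, ∀ A ∈ F n, me ≤ A.edgeSet.ncard) {𝒮 : Finset (Finset U)}
    {G : SimpleGraph (RedVert r' a b U)} (hov : Overlays F G (constructedH r' a b U 𝒮))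
    (hG : G.edgeSet.ncard ≤ r'.choose 2 * me + k * δ) :
    ∃ K : Finset U, #K ≤ k ∧ ∀ S ∈ 𝒮, ∃ u ∈ K, u ∈ S := by
  rw [overlays_iff_forall_hasSpanningCopy, constructedH_eq] at hov
  set T := {e ∈ G.edgeSet | ∃ u, MeetsBlock e u}
  -- the pair hyperedges need `me` edges each, none of which meets a block
  have hT : r'.choose 2 * me + T.ncard ≤ G.edgeSet.ncard := by
    have := card_mul_add_ncard_le_of_hasSpanningCopy (S := pairHyperedge)
      (fun q => hov _ (mem_union_left _ (mem_image_of_mem _ (mem_univ q))))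
      (fun _ _ => card_inter_pairHyperedge_le_one) hmemin (Set.sep_subset _ _)
      (X := T) fun _ ⟨_, u, j, he⟩ _ => ⟨_, he, block_not_mem_pairHyperedge u j⟩
    rwa [Fintype.card_subtype_fst_lt_snd, Fintype.card_fin] at this
  exact exists_hitting_set_of_witnesses MeetsBlock hδ k 𝒮 T (by omega) fun S hS =>
    exists_witness_of_hasSpanningCopy hN hδmin
      (hov _ (mem_union_right _ (mem_image_of_mem _ hS)))

end Reduction

theorem hitting_set_iff_overlay_general (F : ∀ n, Set (SimpleGraph (Fin n)))
    (hclosed : ClosedUnderIsolated F)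
    (r : ℕ) (hr : ∀ n, ∀ A ∈ F n, {v | ∃ w, A.Adj v w}.ncard = r)
    (δ nδ : ℕ) (Fδ : SimpleGraph (Fin nδ)) (hFδ : Fδ ∈ F nδ)
    (hFδdeg : ∃ v, (∃ w, Fδ.Adj v w) ∧ (Fδ.neighborSet v).ncard = δ)
    (hδmin : ∀ n, ∀ A ∈ F n, ∀ v, (∃ w, A.Adj v w) → δ ≤ (A.neighborSet v).ncard)
    (me ne' : ℕ) (Fe : SimpleGraph (Fin ne')) (hFe : Fe ∈ F ne')
    (hFeEdges : Fe.edgeSet.ncard = me)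
    (hmemin : ∀ n, ∀ A ∈ F n, me ≤ A.edgeSet.ncard)
    (U : Type) [Fintype U] [DecidableEq U] (𝒮 : Finset (Finset U)) (k : ℕ) :
    (∃ K : Finset U, K.card ≤ k ∧ ∀ S ∈ 𝒮, ∃ u ∈ K, u ∈ S) ↔
    (∃ G : SimpleGraph (RedVert (r - 1) (nδ - r + 1) (ne' - 2) U),
      Overlays F G (constructedH (r - 1) (nδ - r + 1) (ne' - 2) U 𝒮) ∧
        G.edgeSet.ncard ≤ (r - 1).choose 2 * me + k * δ) := by
  obtain ⟨v₀, hv₀, hv₀δ⟩ := hFδdeg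
  have hδ : 0 < δ := hv₀δ ▸ (Set.ncard_pos (Set.toFinite _)).2 hv₀
  have hr₁ : 0 < r := hr nδ Fδ hFδ ▸ (Set.ncard_pos (Set.toFinite _)).2 ⟨v₀, hv₀⟩
  have hrnδ : r ≤ nδ := hr nδ Fδ hFδ ▸ (Set.ncard_le_card _).trans (Nat.card_fin nδ).le
  obtain ⟨a₁, b₁, hab⟩ : ∃ a₁ b₁, Fe.Adj a₁ b₁ :=
    Set.nonempty_of_ncard_ne_zero (hr _ _ hFe ▸ hr₁.ne')
  have hne' : 2 ≤ ne' := by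
    have := Fin.val_ne_iff.2 hab.ne
    omega
  constructor
  · rintro ⟨K, hK, hKS⟩
    obtain ⟨G, hG, hGcard⟩ := exists_overlays_of_hitting_set (r' := r - 1) (a := nδ - r + 1)
      (b := ne' - 2) hclosed hFδ hv₀ hv₀δ (by rw [hr _ _ hFδ]; omega) (by omega) (by omega)
      hFe hFeEdges hab (by omega) hKS
    exact ⟨G, hG, hGcard.trans (by gcongr)⟩
  · rintro ⟨G, hG, hGcard⟩
    exact exists_hitting_set_of_overlays hδ (fun n A hA => by rw [hr n A hA]; omega) hδmin hmemin
      hG hGcard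

/-- the W[2]-hardness reduction. `F` is closed under addition of isolated
vertices, contains no edgeless graph, all members have exactly `r` non-isolated vertices,
`δ` is the minimum over `F` of the minimum degree of a non-isolated vertex (attained by
`Fδ` on `nδ` vertices), and `Fe` (on `ne'` vertices) has the minimum number `me` of edges.
Then `(U, 𝒮)` has a hitting set of size at most `k` iff the constructed hypergraph has an
overlaying graph with at most `C(r-1,2)·me + k·δ` edges. -/
theorem hitting_set_iff_overlay (F : ∀ n, Set (SimpleGraph (Fin n)))
    (hclosed : ClosedUnderIsolated F)
    (hnoedgeless : ∀ n, (⊥ : SimpleGraph (Fin n)) ∉ F n)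
    (r : ℕ) (hr : ∀ n, ∀ A ∈ F n, {v | ∃ w, A.Adj v w}.ncard = r)
    (δ nδ : ℕ) (Fδ : SimpleGraph (Fin nδ)) (hFδ : Fδ ∈ F nδ)
    (hFδdeg : ∃ v, (∃ w, Fδ.Adj v w) ∧ (Fδ.neighborSet v).ncard = δ)
    (hδmin : ∀ n, ∀ A ∈ F n, ∀ v, (∃ w, A.Adj v w) → δ ≤ (A.neighborSet v).ncard)
    (me ne' : ℕ) (Fe : SimpleGraph (Fin ne')) (hFe : Fe ∈ F ne')
    (hFeEdges : Fe.edgeSet.ncard = me)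
    (hmemin : ∀ n, ∀ A ∈ F n, me ≤ A.edgeSet.ncard)
    (U : Type) [Fintype U] [DecidableEq U] (𝒮 : Finset (Finset U)) (k : ℕ) :
    (∃ K : Finset U, K.card ≤ k ∧ ∀ S ∈ 𝒮, ∃ u ∈ K, u ∈ S) ↔
    (∃ G : SimpleGraph (RedVert (r - 1) (nδ - r + 1) (ne' - 2) U),
      Overlays F G (constructedH (r - 1) (nδ - r + 1) (ne' - 2) U 𝒮) ∧
        G.edgeSet.ncard ≤ (r - 1).choose 2 * me + k * δ) :=
  hitting_set_iff_overlay_general F hclosed r hr δ nδ Fδ hFδ hFδdeg hδmin me ne' Fe hFe hFeEdges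
    hmemin U 𝒮 k
end
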